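/- For an integer m ≥ 2, set a_i := m/(m+1) − i/(i+2) for 1 ≤ i ≤ m−1. Then the a_i are strictly decreasing in i, each a_i is strictly positive, a_{m−1} = 1/(m+1), and a_{m−1} < (m+3)/(2(m+1)). In particular, the m×m symmetric matrix L with entries L_{rs} = −1/(max(r,s) + max(r,s)²) for r ≠ s and L_{ss} = (s−1−s²)/(s+s²) + m/(m+1) is positive semidefinite, its smallest nonzero eigenvalue is 1/(m+1), and this is strictly smaller than (m+3)/(2(m+1)). -/

import Mathlib

/-- The nonzero eigenvalues `a_i = m/(m+1) - i/(i+2)` of the Lichnerowicz Laplacian of the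
standard metric on the Ledger–Obata space `F^{m+1}/Δ^{m+1}F`. -/
noncomputable def LOeig (m i : ℕ) : ℝ := (m : ℝ) / ((m : ℝ) + 1) - (i : ℝ) / ((i : ℝ) + 2)

/-- The `m × m` matrix of the Lichnerowicz Laplacian of the standard metric on the
Ledger–Obata space `F^{m+1}/Δ^{m+1}F` (a Lean index `r : Fin m` corresponds to the paper
index `r + 1`). -/
noncomputable def Lmat (m : ℕ) : Matrix (Fin m) (Fin m) ℝ :=
  fun r s =>
    if r = s then
      (((s : ℕ) : ℝ) + 1 - 1 - (((s : ℕ) : ℝ) + 1) ^ 2) /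
          ((((s : ℕ) : ℝ) + 1) + (((s : ℕ) : ℝ) + 1) ^ 2) + (m : ℝ) / ((m : ℝ) + 1)
    else
      -1 / (((max (r : ℕ) (s : ℕ) : ℕ) : ℝ) + 1 + (((max (r : ℕ) (s : ℕ) : ℕ) : ℝ) + 1) ^ 2)

/-!
`L` is the Laplacian of the complete graph on `{1, …, m}` whose edge `{r, s}` carries the
weight `1/(k(k+1))`, `k = max r s`: its diagonal entries are the row sums of these weights,
which telescope. Hence `2 xᵀLx = ∑ w_rs (x_r - x_s)²` and `L` is positive semidefinite. An
eigenvector for a nonzero eigenvalue is orthogonal to the constant vector, and every weight is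
at least `1/(m(m+1))`, so its Rayleigh quotient is at least `m · 1/(m(m+1)) = 1/(m+1)`; this
value is attained at `(1, …, 1, -(m-1))`.
-/

open Finset

namespace Matrix

variable {n : Type*} [Fintype n] {M : Matrix n n ℝ}

lemma sum_sum_sub_sq (x : n → ℝ) :
    ∑ i, ∑ j, (x i - x j) ^ 2 = 2 * (Fintype.card n * (x ⬝ᵥ x) - (∑ i, x i) ^ 2) := by
  have expand : ∀ i j, (x i - x j) ^ 2 = x i ^ 2 + x j ^ 2 - 2 * x i * x j := fun i j => by ring
  simp only [expand, sum_add_distrib, sum_sub_distrib, sum_const, card_univ, nsmul_eq_mul,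
    ← mul_sum, ← sum_mul, dotProduct, sq]
  ring

namespace IsSymm

variable (hM : M.IsSymm) (hrow : ∀ i, ∑ j, M i j = 0)
include hM hrow

theorem two_mul_dotProduct_mulVec_self (x : n → ℝ) :
    2 * (x ⬝ᵥ M *ᵥ x) = ∑ i, ∑ j, -M i j * (x i - x j) ^ 2 := by
  have hcol : ∀ j, ∑ i, M i j = 0 := fun j => by simpa only [hM.apply] using hrow j
  have expand : ∀ i j, -M i j * (x i - x j) ^ 2
      = 2 * (x i * (M i j * x j)) - M i j * x i ^ 2 - M i j * x j ^ 2 := fun i j => by ring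
  simp only [expand, sum_sub_distrib, ← mul_sum, ← sum_mul, hrow, zero_mul, sum_const_zero]
  rw [sum_comm (f := fun i j => M i j * x j ^ 2)]
  simp only [← sum_mul, hcol, zero_mul, sum_const_zero, dotProduct, mulVec]
  ring

theorem posSemidef (hoff : ∀ i j, i ≠ j → M i j ≤ 0) : M.PosSemidef := by
  refine PosSemidef.of_dotProduct_mulVec_nonneg (isHermitian_iff_isSymm.mpr hM) fun x => ?_
  have hsum : 0 ≤ ∑ i, ∑ j, -M i j * (x i - x j) ^ 2 := by
    refine sum_nonneg fun i _ => sum_nonneg fun j _ => ?_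
    rcases eq_or_ne i j with rfl | hij
    · simp
    · exact mul_nonneg (neg_nonneg.mpr (hoff i j hij)) (sq_nonneg _)
  rw [star_trivial]
  linarith [hM.two_mul_dotProduct_mulVec_self hrow x]

theorem mul_card_mul_dotProduct_self_le {c : ℝ} (hoff : ∀ i j, i ≠ j → c ≤ -M i j)
    {x : n → ℝ} (hx : ∑ i, x i = 0) :
    c * Fintype.card n * (x ⬝ᵥ x) ≤ x ⬝ᵥ M *ᵥ x := by
  have hsum : c * ∑ i, ∑ j, (x i - x j) ^ 2 ≤ ∑ i, ∑ j, -M i j * (x i - x j) ^ 2 := by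
    simp only [mul_sum]
    refine sum_le_sum fun i _ => sum_le_sum fun j _ => ?_
    rcases eq_or_ne i j with rfl | hij
    · simp
    · exact mul_le_mul_of_nonneg_right (hoff i j hij) (sq_nonneg _)
  rw [sum_sum_sub_sq, hx] at hsum
  linarith [hM.two_mul_dotProduct_mulVec_self hrow x]

theorem sum_eq_zero_of_mulVec_eq_smul {μ : ℝ} {v : n → ℝ} (hv : M *ᵥ v = μ • v) (hμ : μ ≠ 0) :
    ∑ i, v i = 0 := by
  have hone : 1 ᵥ* M = 0 := by
    rw [← mulVec_transpose, hM.eq]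
    funext i
    simp [mulVec, dotProduct_one, hrow]
  have h : μ * ∑ i, v i = 0 := by
    rw [← one_dotProduct, ← smul_eq_mul, ← dotProduct_smul, ← hv, dotProduct_mulVec, hone,
      zero_dotProduct]
  exact (mul_eq_zero.mp h).resolve_left hμ

theorem mul_card_le_of_mulVec_eq_smul {c : ℝ} (hoff : ∀ i j, i ≠ j → c ≤ -M i j) {μ : ℝ}
    {v : n → ℝ} (hv0 : v ≠ 0) (hv : M *ᵥ v = μ • v) (hμ : μ ≠ 0) :
    c * Fintype.card n ≤ μ := by
  have hquad := hM.mul_card_mul_dotProduct_self_le hrow hoff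
    (hM.sum_eq_zero_of_mulVec_eq_smul hrow hv hμ)
  rw [hv, dotProduct_smul, smul_eq_mul] at hquad
  have hpos : 0 < v ⬝ᵥ v := by simpa using dotProduct_star_self_pos_iff.mpr hv0
  exact le_of_mul_le_mul_right hquad hpos

end IsSymm
end Matrix

open Matrix

theorem LOeig_strictAnti (m : ℕ) : StrictAnti (LOeig m) := by
  intro i j hij
  have hij' : (i : ℝ) < j := by exact_mod_cast hij
  unfold LOeig
  rw [sub_lt_sub_iff_left, div_lt_div_iff₀ (by positivity) (by positivity)]
  linarith

theorem LOeig_sub_one {m : ℕ} (hm : 1 ≤ m) : LOeig m (m - 1) = 1 / ((m : ℝ) + 1) := by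
  rw [LOeig, Nat.cast_sub hm, Nat.cast_one, show (m : ℝ) - 1 + 2 = m + 1 by ring]
  field_simp
  ring

/-- The paper's weight `1/(k(k+1))` at `k + 1`, in telescoping form. -/
noncomputable def lmatWeight (k : ℕ) : ℝ := 1 / ((k : ℝ) + 1) - 1 / ((k : ℝ) + 2)

theorem lmatWeight_eq (k : ℕ) : lmatWeight k = 1 / (((k : ℝ) + 1) * ((k : ℝ) + 2)) := by
  rw [lmatWeight]
  field_simp
  ring

theorem lmatWeight_pos (k : ℕ) : 0 < lmatWeight k := by
  rw [lmatWeight_eq]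
  positivity

theorem lmatWeight_antitone : Antitone lmatWeight := by
  intro k l hkl
  rw [lmatWeight_eq, lmatWeight_eq]
  gcongr

theorem sum_lmatWeight_Ico {a b : ℕ} (hab : a ≤ b) :
    ∑ k ∈ Ico a b, lmatWeight k = 1 / ((a : ℝ) + 1) - 1 / ((b : ℝ) + 1) := by
  induction b, hab using Nat.le_induction with
  | base => simp
  | succ b hab ih =>
    rw [sum_Ico_succ_top hab, ih, lmatWeight]
    push_cast
    ring

theorem Lmat_apply_of_ne {m : ℕ} {r s : Fin m} (h : r ≠ s) :
    Lmat m r s = -lmatWeight (max (r : ℕ) s) := by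
  rw [Lmat, if_neg h, lmatWeight]
  field_simp
  ring

theorem Lmat_apply_self (m : ℕ) (r : Fin m) :
    Lmat m r r = r * lmatWeight r + (1 / ((r : ℝ) + 2) - 1 / ((m : ℝ) + 1)) := by
  rw [Lmat, if_pos rfl, lmatWeight]
  field_simp
  ring

theorem Lmat_isSymm (m : ℕ) : (Lmat m).IsSymm := by
  refine Matrix.IsSymm.ext fun r s => ?_
  rcases eq_or_ne r s with rfl | h
  · rfl
  · rw [Lmat_apply_of_ne h, Lmat_apply_of_ne h.symm, max_comm]

theorem sum_Lmat_apply (m : ℕ) (r : Fin m) : ∑ s, Lmat m r s = 0 := by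
  set f : ℕ → ℝ := fun t => if t = r then Lmat m r r else -lmatWeight (max (r : ℕ) t)
  have hf : ∀ s : Fin m, Lmat m r s = f s := by
    intro s
    rcases eq_or_ne r s with rfl | h
    · simp [f]
    · simp [f, Lmat_apply_of_ne h, Fin.val_ne_of_ne h.symm]
  have below : ∑ t ∈ range r, f t = -(r * lmatWeight r) := by
    rw [sum_congr rfl fun t ht => ?_, sum_const, card_range, nsmul_eq_mul, mul_neg]
    have htr : t < r := mem_range.mp ht
    simp [f, htr.ne, max_eq_left htr.le]
  have above : ∑ t ∈ Ico (r + 1 : ℕ) m, f t = -(1 / ((r : ℝ) + 2) - 1 / ((m : ℝ) + 1)) := by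
    rw [sum_congr rfl fun t ht => ?_, sum_neg_distrib, sum_lmatWeight_Ico r.2]
    · push_cast; ring
    have htr : (r : ℕ) < t := (mem_Ico.mp ht).1
    simp [f, htr.ne', max_eq_right htr.le]
  rw [Fintype.sum_congr _ _ hf, Fin.sum_univ_eq_sum_range f, ← sum_range_add_sum_Ico f r.2,
    sum_range_succ, below, above, show f r = Lmat m r r from if_pos rfl, Lmat_apply_self]
  ring

theorem Lmat_posSemidef (m : ℕ) : (Lmat m).PosSemidef :=
  (Lmat_isSymm m).posSemidef (sum_Lmat_apply m) fun _ _ h => by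
    rw [Lmat_apply_of_ne h, neg_nonpos]
    exact (lmatWeight_pos _).le

theorem one_div_le_of_Lmat_mulVec_eq_smul (n : ℕ) {μ : ℝ} {v : Fin (n + 1) → ℝ} (hv0 : v ≠ 0)
    (hv : Lmat (n + 1) *ᵥ v = μ • v) (hμ : μ ≠ 0) : 1 / (((n + 1 : ℕ) : ℝ) + 1) ≤ μ := by
  have hoff : ∀ r s : Fin (n + 1), r ≠ s → lmatWeight n ≤ -Lmat (n + 1) r s := fun r s h => by
    rw [Lmat_apply_of_ne h, neg_neg]
    exact lmatWeight_antitone (max_le (Fin.is_le r) (Fin.is_le s))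
  have h := (Lmat_isSymm _).mul_card_le_of_mulVec_eq_smul (sum_Lmat_apply _) hoff hv0 hv hμ
  rw [Fintype.card_fin, lmatWeight] at h
  convert h using 1
  push_cast
  field_simp
  ring

noncomputable def lmatEigvec (n : ℕ) : Fin (n + 1) → ℝ :=
  1 - ((n : ℝ) + 1) • Pi.single (Fin.last n) 1

theorem lmatEigvec_ne_zero {n : ℕ} (hn : n ≠ 0) : lmatEigvec n ≠ 0 := by
  intro h
  have hlast : lmatEigvec n (Fin.last n) = -n := by simp [lmatEigvec]
  rw [h, Pi.zero_apply, zero_eq_neg, Nat.cast_eq_zero] at hlast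
  exact hn hlast

theorem Lmat_mulVec_lmatEigvec (n : ℕ) :
    Lmat (n + 1) *ᵥ lmatEigvec n = (1 / (((n + 1 : ℕ) : ℝ) + 1)) • lmatEigvec n := by
  have hone : Lmat (n + 1) *ᵥ 1 = 0 := funext fun r => by
    simp [mulVec, dotProduct_one, sum_Lmat_apply]
  rw [lmatEigvec, mulVec_sub, mulVec_smul, hone, mulVec_single_one]
  funext r
  simp only [Pi.sub_apply, Pi.smul_apply, smul_eq_mul, Pi.zero_apply, Pi.one_apply, col_apply]
  rcases eq_or_ne r (Fin.last n) with rfl | hr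
  · rw [Pi.single_eq_same, Lmat_apply_self, Fin.val_last, lmatWeight]
    push_cast
    field_simp
    ring
  · rw [Pi.single_eq_of_ne hr, Lmat_apply_of_ne hr, Fin.val_last, max_eq_right (Fin.is_le r),
      lmatWeight]
    push_cast
    field_simp
    ring

/-- The `a_i` are strictly decreasing and positive, `a_{m-1} = 1/(m+1) < (m+3)/(2(m+1))`;
consequently `L` is positive semidefinite and its smallest nonzero eigenvalue is `1/(m+1)`,
which is strictly smaller than `(m+3)/(2(m+1))`. -/
theorem LOeig_properties (m : ℕ) (hm : 2 ≤ m) :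
    (∀ i j : ℕ, 1 ≤ i → i < j → j ≤ m - 1 → LOeig m j < LOeig m i) ∧
    (∀ i : ℕ, 1 ≤ i → i ≤ m - 1 → 0 < LOeig m i) ∧
    LOeig m (m - 1) = 1 / ((m : ℝ) + 1) ∧
    LOeig m (m - 1) < ((m : ℝ) + 3) / (2 * ((m : ℝ) + 1)) ∧
    (Lmat m).PosSemidef ∧
    (∃ v : Fin m → ℝ, v ≠ 0 ∧ (Lmat m).mulVec v = (1 / ((m : ℝ) + 1)) • v) ∧
    (∀ (μ : ℝ) (v : Fin m → ℝ), v ≠ 0 → (Lmat m).mulVec v = μ • v → μ ≠ 0 →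
      1 / ((m : ℝ) + 1) ≤ μ) ∧
    1 / ((m : ℝ) + 1) < ((m : ℝ) + 3) / (2 * ((m : ℝ) + 1)) := by
  obtain ⟨n, rfl⟩ : ∃ n, m = n + 1 := ⟨m - 1, by omega⟩
  have hlast := LOeig_sub_one (Nat.le_add_left 1 n)
  have hlt : 1 / (((n + 1 : ℕ) : ℝ) + 1)
      < (((n + 1 : ℕ) : ℝ) + 3) / (2 * (((n + 1 : ℕ) : ℝ) + 1)) := by
    rw [div_lt_div_iff₀ (by positivity) (by positivity)]
    nlinarith [(n + 1 : ℕ).cast_nonneg (α := ℝ)]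
  refine ⟨fun i j _ hij _ => LOeig_strictAnti _ hij, fun i _ hi => ?_, hlast, hlast ▸ hlt,
    Lmat_posSemidef _, ⟨lmatEigvec n, lmatEigvec_ne_zero (by omega), Lmat_mulVec_lmatEigvec n⟩,
    fun μ v hv0 hv hμ => one_div_le_of_Lmat_mulVec_eq_smul n hv0 hv hμ, hlt⟩
  calc 0 < 1 / (((n + 1 : ℕ) : ℝ) + 1) := by positivity
    _ = LOeig (n + 1) (n + 1 - 1) := hlast.symm
    _ ≤ LOeig (n + 1) i := (LOeig_strictAnti _).antitone hi
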